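/- Fix ε with 0 ≤ ε ≤ 1/2 and set X̃ = (1−2ε)X + 2√(ε(1−ε))Z and Z̃ = (1−2ε)Z + 2√(ε(1−ε))X. Let |χ⟩ = cos(π/8)|0⟩ + sin(π/8)|1⟩ and let W̃⁽³⁾ = 2·X̃⊗X̃⊗X̃ + I⊗Z̃⊗Z̃ + Z̃⊗I⊗Z̃ + Z̃⊗Z̃⊗I. Then ⟨χ|⊗⟨χ|⊗⟨χ| W̃⁽³⁾ |χ⟩⊗|χ⟩⊗|χ⟩ = (3/2)(1+√2) − 3√2·ε − √2·(1−2ε)³ + 2·(3 + √2/2 − 6ε + √2(1−2ε)²)·√(ε(1−ε)). -/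
import Mathlib


open Matrix Complex Kronecker

noncomputable section

def PauliX : Matrix (Fin 2) (Fin 2) ℂ := !![0, 1; 1, 0]
def PauliY : Matrix (Fin 2) (Fin 2) ℂ := !![0, -Complex.I; Complex.I, 0]
def PauliZ : Matrix (Fin 2) (Fin 2) ℂ := !![1, 0; 0, -1]

/-- The 2×2 identity matrix. -/
def Id2 : Matrix (Fin 2) (Fin 2) ℂ := 1

/-- The largest eigenvalue of a (Hermitian) matrix, as the supremum of the
    Rayleigh quotient over unit vectors. -/
noncomputable def maxEig {m : Type*} [Fintype m] [DecidableEq m]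
    (M : Matrix m m ℂ) : ℝ :=
  ⨆ v : {v : m → ℂ // ∑ i, Complex.normSq (v i) = 1},
    (star v.1 ⬝ᵥ (M *ᵥ v.1)).re

/-- a(θ) = ⟨X̃₁⟩ = 2√(ε(1−ε))·cos 2θ + (1−2ε)·sin 2θ. -/
def aCoef (ε θ : ℝ) : ℝ :=
  2 * Real.sqrt (ε * (1 - ε)) * Real.cos (2 * θ) + (1 - 2 * ε) * Real.sin (2 * θ)

/-- b(θ) = ⟨Z̃₁⟩ = (1−2ε)·cos 2θ + 2√(ε(1−ε))·sin 2θ. -/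
def bCoef (ε θ : ℝ) : ℝ :=
  (1 - 2 * ε) * Real.cos (2 * θ) + 2 * Real.sqrt (ε * (1 - ε)) * Real.sin (2 * θ)

/-- The tilted observable X̃ = (1−2ε)X + 2√(ε(1−ε))Z. -/
def Xt (ε : ℝ) : Matrix (Fin 2) (Fin 2) ℂ :=
  ((1 - 2 * ε : ℝ) : ℂ) • PauliX + ((2 * Real.sqrt (ε * (1 - ε)) : ℝ) : ℂ) • PauliZ

/-- The tilted observable Z̃ = (1−2ε)Z + 2√(ε(1−ε))X. -/
def Zt (ε : ℝ) : Matrix (Fin 2) (Fin 2) ℂ :=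
  ((1 - 2 * ε : ℝ) : ℂ) • PauliZ + ((2 * Real.sqrt (ε * (1 - ε)) : ℝ) : ℂ) • PauliX

/-- |χ⟩ = cos(π/8)|0⟩ + sin(π/8)|1⟩. -/
def chiVec : Fin 2 → ℂ := fun i =>
  if i = 0 then ((Real.cos (Real.pi / 8) : ℝ) : ℂ) else ((Real.sin (Real.pi / 8) : ℝ) : ℂ)

/-- The product vector |χ⟩⊗|χ⟩⊗|χ⟩. -/
def chi3 : (Fin 2 × Fin 2) × Fin 2 → ℂ := fun p => chiVec p.1.1 * chiVec p.1.2 * chiVec p.2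

/-- The fully tilted three-qubit stabilizer witness
    W̃⁽³⁾ = 2·X̃⊗X̃⊗X̃ + I⊗Z̃⊗Z̃ + Z̃⊗I⊗Z̃ + Z̃⊗Z̃⊗I. -/
def W3tilt (ε : ℝ) : Matrix ((Fin 2 × Fin 2) × Fin 2) ((Fin 2 × Fin 2) × Fin 2) ℂ :=
  (2 : ℂ) • (Xt ε ⊗ₖ Xt ε ⊗ₖ Xt ε)
    + Id2 ⊗ₖ Zt ε ⊗ₖ Zt ε + Zt ε ⊗ₖ Id2 ⊗ₖ Zt ε + Zt ε ⊗ₖ Zt ε ⊗ₖ Id2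

lemma chiVec_eq : chiVec = fun i : Fin 2 =>
    if i = 0 then ((Real.cos (Real.pi / 8) : ℝ) : ℂ)
    else ((Real.sin (Real.pi / 8) : ℝ) : ℂ) := rfl

lemma sincos2 : (2:ℂ) * Real.sin (Real.pi/8) * Real.cos (Real.pi/8)
    = ((Real.sqrt 2 : ℝ) : ℂ) / 2 := by
  have : 2 * Real.sin (Real.pi/8) * Real.cos (Real.pi/8) = Real.sqrt 2 / 2 := by
    rw [← Real.sin_two_mul, show 2 * (Real.pi/8) = Real.pi/4 by ring, Real.sin_pi_div_four]
  exact_mod_cast congrArg Complex.ofReal this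

lemma cossq_sub : ((Real.cos (Real.pi/8) : ℝ) : ℂ)^2 - ((Real.sin (Real.pi/8) : ℝ) : ℂ)^2
    = ((Real.sqrt 2 : ℝ) : ℂ) / 2 := by
  have h1 := Real.cos_two_mul (Real.pi/8)
  rw [show 2 * (Real.pi/8) = Real.pi/4 by ring, Real.cos_pi_div_four] at h1
  have h2 := Real.sin_sq_add_cos_sq (Real.pi/8)
  have : Real.cos (Real.pi/8)^2 - Real.sin (Real.pi/8)^2 = Real.sqrt 2 / 2 := by
    nlinarith [h1, h2]
  exact_mod_cast congrArg Complex.ofReal this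

lemma sinsq_add : ((Real.cos (Real.pi/8) : ℝ) : ℂ)^2 + ((Real.sin (Real.pi/8) : ℝ) : ℂ)^2
    = 1 := by
  have h2 := Real.sin_sq_add_cos_sq (Real.pi/8)
  have : Real.cos (Real.pi/8)^2 + Real.sin (Real.pi/8)^2 = 1 := by linarith
  exact_mod_cast congrArg Complex.ofReal this

lemma kron3_quad (A B C : Matrix (Fin 2) (Fin 2) ℂ) :
    star chi3 ⬝ᵥ ((A ⊗ₖ B ⊗ₖ C) *ᵥ chi3) =
    (star chiVec ⬝ᵥ (A *ᵥ chiVec)) * (star chiVec ⬝ᵥ (B *ᵥ chiVec))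
      * (star chiVec ⬝ᵥ (C *ᵥ chiVec)) := by
  have hchi : chi3 = fun p : (Fin 2 × Fin 2) × Fin 2 =>
      chiVec p.1.1 * chiVec p.1.2 * chiVec p.2 := rfl
  rw [hchi]
  simp only [dotProduct, mulVec, Fintype.sum_prod_type, Fin.sum_univ_two,
    Matrix.kroneckerMap_apply, Pi.star_apply, star_mul']
  ring

lemma key_scalar (ε r q : ℝ) (hr2 : r^2 = ε - ε^2) (hq2 : q^2 = 2) :
    2*((1-2*ε+2*r)*(q/2))^3 + 3*((1-2*ε+2*r)*(q/2))^2 =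
      (3/2)*(1+q) - 3*q*ε - q*(1-2*ε)^3 + 2*(3+q/2-6*ε+q*(1-2*ε)^2)*r := by
  linear_combination ((3 / 4) - 3*ε + 3*ε^2 + 3*r - 6*r*ε + 3*r^2 + (1 / 4)*q
      - (3 / 2)*q*ε + 3*q*ε^2 - 2*q*ε^3 + (3 / 2)*q*r - 6*q*r*ε + 6*q*r*ε^2
      + 3*q*r^2 - 6*q*r^2*ε + 2*q*r^3) * hq2
    + (6 + 6*q - 12*q*ε + 4*q*r) * hr2

lemma expXt (ε : ℝ) :
    star chiVec ⬝ᵥ (Xt ε *ᵥ chiVec) =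
      (((1 - 2*ε + 2*Real.sqrt (ε*(1-ε))) * (Real.sqrt 2/2) : ℝ) : ℂ) := by
  rw [chiVec_eq]
  simp only [Xt, PauliX, PauliZ, dotProduct, mulVec, Fin.sum_univ_two,
    Matrix.add_apply, Matrix.smul_apply, Matrix.of_apply, Matrix.cons_val',
    Matrix.cons_val_zero, Matrix.cons_val_one, Matrix.head_cons, Matrix.head_fin_const,
    Matrix.empty_val', Matrix.cons_val_fin_one,
    Pi.star_apply, smul_eq_mul, Fin.isValue, if_true, one_ne_zero, if_false,
    Complex.star_def, Complex.conj_ofReal, ite_true, ite_false, reduceIte]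
  push_cast [-Complex.ofReal_cos, -Complex.ofReal_sin]
  linear_combination ((1:ℂ) - 2*ε) * sincos2 + 2*((Real.sqrt (ε*(1-ε)):ℝ):ℂ) * cossq_sub

lemma expZt (ε : ℝ) :
    star chiVec ⬝ᵥ (Zt ε *ᵥ chiVec) =
      (((1 - 2*ε + 2*Real.sqrt (ε*(1-ε))) * (Real.sqrt 2/2) : ℝ) : ℂ) := by
  rw [chiVec_eq]
  simp only [Zt, PauliX, PauliZ, dotProduct, mulVec, Fin.sum_univ_two,
    Matrix.add_apply, Matrix.smul_apply, Matrix.of_apply, Matrix.cons_val',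
    Matrix.cons_val_zero, Matrix.cons_val_one, Matrix.head_cons, Matrix.head_fin_const,
    Matrix.empty_val', Matrix.cons_val_fin_one,
    Pi.star_apply, smul_eq_mul, Fin.isValue, if_true, one_ne_zero, if_false,
    Complex.star_def, Complex.conj_ofReal, ite_true, ite_false, reduceIte]
  push_cast [-Complex.ofReal_cos, -Complex.ofReal_sin]
  linear_combination (2*((Real.sqrt (ε*(1-ε)):ℝ):ℂ)) * sincos2 + ((1:ℂ) - 2*ε) * cossq_sub

lemma expId : star chiVec ⬝ᵥ (Id2 *ᵥ chiVec) = 1 := by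
  rw [show Id2 = (1 : Matrix (Fin 2) (Fin 2) ℂ) from rfl, Matrix.one_mulVec, chiVec_eq]
  simp only [dotProduct, Fin.sum_univ_two, Pi.star_apply, Fin.isValue,
    if_true, one_ne_zero, if_false, Complex.star_def, Complex.conj_ofReal,
    ite_true, ite_false, reduceIte]
  linear_combination sinsq_add

/-- the value of the fully tilted three-qubit stabilizer witness
    on the fully separable product state |χ(π/8)⟩^{⊗3}. -/
theorem stab3_fully_separable_value (ε : ℝ) (hε0 : 0 ≤ ε) (hε1 : ε ≤ 1 / 2) :
    star chi3 ⬝ᵥ (W3tilt ε *ᵥ chi3) =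
      (((3 / 2) * (1 + Real.sqrt 2) - 3 * Real.sqrt 2 * ε
          - Real.sqrt 2 * (1 - 2 * ε) ^ 3
          + 2 * (3 + Real.sqrt 2 / 2 - 6 * ε + Real.sqrt 2 * (1 - 2 * ε) ^ 2)
              * Real.sqrt (ε * (1 - ε)) : ℝ) : ℂ) := by
  have h0e : (0:ℝ) ≤ ε * (1 - ε) := by nlinarith
  have hr2 : Real.sqrt (ε*(1-ε))^2 = ε - ε^2 := by
    rw [Real.sq_sqrt h0e]; ring
  have hq2 : (Real.sqrt 2)^2 = 2 := Real.sq_sqrt (by norm_num)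
  have key := key_scalar ε (Real.sqrt (ε*(1-ε))) (Real.sqrt 2) hr2 hq2
  simp only [W3tilt]
  rw [Matrix.add_mulVec, Matrix.add_mulVec, Matrix.add_mulVec, Matrix.smul_mulVec,
    dotProduct_add, dotProduct_add, dotProduct_add, dotProduct_smul,
    kron3_quad, kron3_quad, kron3_quad, kron3_quad, expXt, expZt, expId, smul_eq_mul]
  have keyC := congrArg Complex.ofReal key
  push_cast at keyC ⊢
  linear_combination keyC
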